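/- arXiv:1607.05392 — 6 statements merged into one kernel-verified Lean document; each statement's English description precedes it below -/
import Mathlib

section
/- Let G be a bipartite graph with a unique perfect matching. Then G contains at least one vertex of degree 1 in each of the two color classes (partite sets). -/
open scoped Classical

variable {V : Type*} [Fintype V] [DecidableEq V]

/-- `M` is a perfect matching of `G`: a set of edges of `G` such that every
vertex lies in exactly one edge of `M`. -/
def IsPM (G : SimpleGraph V) (M : Set (Sym2 V)) : Prop :=
  M ⊆ G.edgeSet ∧ ∀ v : V, ∃! e, e ∈ M ∧ v ∈ e

/-- `M` is the unique perfect matching of `G`. -/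
def IsUniquePM (G : SimpleGraph V) (M : Set (Sym2 V)) : Prop :=
  IsPM G M ∧ ∀ M', IsPM G M' → M' = M

/-- A closed walk `c` is an `M`-alternating cycle: it is a cycle of even length
whose edges lie alternately in `M` and outside `M`. -/
def IsAltCycle {G : SimpleGraph V} (M : Set (Sym2 V)) {v : V} (c : G.Walk v v) : Prop :=
  c.IsCycle ∧ Even c.edges.length ∧
    ((∀ i (h : i < c.edges.length), c.edges.get ⟨i, h⟩ ∈ M ↔ Even i) ∨
     (∀ i (h : i < c.edges.length), c.edges.get ⟨i, h⟩ ∈ M ↔ ¬ Even i))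

/-- `S` is an anti-forcing set of the perfect matching `M` of `G`:
`S` consists of edges of `G` not in `M` and `M` is the unique perfect matching
of `G - S`. -/
def IsAntiForcingSet (G : SimpleGraph V) (M S : Set (Sym2 V)) : Prop :=
  S ⊆ G.edgeSet \ M ∧ IsUniquePM (G.deleteEdges S) M

/-- The anti-forcing number of a perfect matching `M` of `G`. -/
noncomputable def af (G : SimpleGraph V) (M : Set (Sym2 V)) : ℕ :=
  sInf {n | ∃ S : Finset (Sym2 V), S.card = n ∧ IsAntiForcingSet G M ↑S}

private lemma key (G : SimpleGraph V) [DecidableRel G.Adj]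
    (C : V → Bool) (hC : ∀ u v, G.Adj u v → C u ≠ C v)
    (M : Set (Sym2 V)) (hM : IsUniquePM G M)
    (u0 : V) (hu0 : C u0 = true) :
    ∃ u, C u = true ∧ G.degree u = 1 := by
  by_contra hcon
  push_neg at hcon
  obtain ⟨⟨hMsub, hPM⟩, huniqM⟩ := hM
  choose eM heM using hPM
  set f : V → V := fun v => Sym2.Mem.other (heM v).1.2 with hfdef
  have keq : ∀ v, eM v = s(v, f v) := fun v => (Sym2.other_spec (heM v).1.2).symm
  have hfM : ∀ v, s(v, f v) ∈ M := by
    intro v; have := (heM v).1.1; rwa [keq v] at this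
  have hAdjf : ∀ v, G.Adj v (f v) := fun v => G.mem_edgeSet.mp (hMsub (hfM v))
  have hMeq : ∀ v y, y ∈ M → v ∈ y → y = s(v, f v) := by
    intro v y h1 h2
    have := (heM v).2 y ⟨h1, h2⟩
    rwa [keq v] at this
  have hff : ∀ v, f (f v) = v := by
    intro v
    have h1 : s(f v, f (f v)) = s(v, f v) :=
      (hMeq (f v) (s(v, f v)) (hfM v) (Sym2.mem_mk_right v (f v))).symm
    rcases Sym2.eq_iff.mp h1 with ⟨h, h'⟩ | ⟨h, h'⟩
    · exact absurd h.symm (hAdjf v).ne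
    · exact h'
  -- every true vertex has ≥ 2 neighbors
  have hdeg : ∀ u, C u = true → 1 < (G.neighborFinset u).card := by
    intro u hu
    have h1 : G.degree u ≠ 1 := hcon u hu
    have h0 : 0 < (G.neighborFinset u).card :=
      Finset.card_pos.mpr ⟨f u, (G.mem_neighborFinset u (f u)).mpr (hAdjf u)⟩
    have : G.degree u = (G.neighborFinset u).card := rfl
    omega
  have hgex : ∀ u : V, ∃ w, C u = true → G.Adj u w ∧ w ≠ f u := by
    intro u
    by_cases h : C u = true
    · obtain ⟨w, hw, hwne⟩ := Finset.exists_mem_ne (hdeg u h) (f u)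
      exact ⟨w, fun _ => ⟨(G.mem_neighborFinset u w).mp hw, hwne⟩⟩
    · exact ⟨u, fun h' => absurd h' h⟩
  choose g hg using hgex
  -- the alternating sequence
  set seq : ℕ → V := fun n => (fun x => f (g x))^[n] u0 with hseqdef
  have hseq : ∀ n, seq (n + 1) = f (g (seq n)) := by
    intro n
    simp only [hseqdef, Function.iterate_succ_apply']
  have hcolseq : ∀ n, C (seq n) = true := by
    intro n
    induction n with
    | zero => exact hu0
    | succ n ih =>
      rw [hseq n]
      have hadj1 : G.Adj (seq n) (g (seq n)) := (hg (seq n) ih).1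
      have hc1 : C (g (seq n)) = false := by
        have := hC _ _ hadj1
        rw [ih] at this
        exact Bool.not_eq_true _ |>.mp (Ne.symm this)
      have := hC _ _ (hAdjf (g (seq n)))
      rw [hc1] at this
      exact Bool.not_eq_false _ |>.mp (Ne.symm this)
  have hgadj : ∀ n, G.Adj (seq n) (g (seq n)) := fun n => (hg (seq n) (hcolseq n)).1
  have hgne : ∀ n, g (seq n) ≠ f (seq n) := fun n => (hg (seq n) (hcolseq n)).2
  have hgcol : ∀ n, C (g (seq n)) = false := by
    intro n
    have := hC _ _ (hgadj n)
    rw [hcolseq n] at this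
    exact Bool.not_eq_true _ |>.mp (Ne.symm this)
  -- find the first repeat
  have hex : ∃ n, ∃ m, m < n ∧ seq m = seq n := by
    obtain ⟨a, b, hne, heq⟩ := Finite.exists_ne_map_eq_of_infinite seq
    rcases hne.lt_or_gt with h | h
    · exact ⟨b, a, h, heq⟩
    · exact ⟨a, b, h, heq.symm⟩
  obtain ⟨i, hij, hije⟩ := Nat.find_spec hex
  set j := Nat.find hex with hjdef
  have hinj : ∀ k l, k < j → l < j → seq k = seq l → k = l := by
    intro k l hk hl he
    rcases lt_trichotomy k l with h | h | h
    · exact absurd (⟨k, h, he⟩ : ∃ m, m < l ∧ seq m = seq l) (Nat.find_min hex hl)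
    · exact h
    · exact absurd (⟨l, h, he.symm⟩ : ∃ m, m < k ∧ seq m = seq k) (Nat.find_min hex hk)
  have hginj : ∀ k l, i ≤ k → k < j → i ≤ l → l < j → g (seq k) = g (seq l) → k = l := by
    have main : ∀ k l, i ≤ k → k < j → i ≤ l → l < j → k < l → g (seq k) = g (seq l) → False := by
      intro k l hik hkj hil hlj hkl he
      have h1 : seq (k + 1) = seq (l + 1) := by rw [hseq, hseq, he]
      rcases Nat.lt_or_ge (l + 1) j with h | h
      · have := hinj (k + 1) (l + 1) (by omega) h h1
        omega
      · have hl1 : l + 1 = j := by omega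
        have h2 : seq (k + 1) = seq i := by rw [h1, hl1, ← hije]
        have := hinj (k + 1) i (by omega) (by omega) h2
        omega
    intro k l hik hkj hil hlj he
    rcases lt_trichotomy k l with h | h | h
    · exact absurd (main k l hik hkj hil hlj h he) not_false
    · exact h
    · exact absurd (main l k hil hlj hik hkj h he.symm) not_false
  -- the new matching
  set A : Set (Sym2 V) := {e | ∃ k, i ≤ k ∧ k < j ∧ e = s(g (seq k), f (g (seq k)))} with hAdef
  set B : Set (Sym2 V) := {e | ∃ k, i ≤ k ∧ k < j ∧ e = s(seq k, g (seq k))} with hBdef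
  set M' : Set (Sym2 V) := (M \ A) ∪ B with hM'def
  -- membership helpers
  have hUW : ∀ k l, seq k ≠ g (seq l) := by
    intro k l he
    have := hgcol l
    rw [← he, hcolseq k] at this
    exact Bool.noConfusion this
  have hfg : ∀ k, f (g (seq k)) = seq (k + 1) := fun k => (hseq k).symm
  -- an M-edge at seq k (for k in the cycle range) is in A
  have hUinA : ∀ k, i ≤ k → k < j → s(seq k, f (seq k)) ∈ A := by
    intro k hik hkj
    rcases Nat.lt_or_ge i k with h | h
    · refine ⟨k - 1, by omega, by omega, ?_⟩
      have hk1 : k - 1 + 1 = k := by omega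
      have h1 : f (g (seq (k - 1))) = seq k := by rw [hfg, hk1]
      have h2 : g (seq (k - 1)) = f (seq k) := by
        rw [← h1, hff]
      rw [h1, h2, Sym2.eq_swap]
    · have hki : k = i := by omega
      refine ⟨j - 1, by omega, by omega, ?_⟩
      have hj1 : j - 1 + 1 = j := by omega
      have h1 : f (g (seq (j - 1))) = seq k := by rw [hfg, hj1, ← hije, hki]
      have h2 : g (seq (j - 1)) = f (seq k) := by rw [← h1, hff]
      rw [h1, h2, Sym2.eq_swap]
  -- M' is a perfect matching
  have hPM' : IsPM G M' := by
    constructor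
    · intro e he
      rcases he with ⟨heM, _⟩ | ⟨k, _, _, rfl⟩
      · exact hMsub heM
      · exact G.mem_edgeSet.mpr (hgadj k)
    · intro v
      by_cases hvU : ∃ k, i ≤ k ∧ k < j ∧ v = seq k
      · obtain ⟨k, hik, hkj, rfl⟩ := hvU
        refine ⟨s(seq k, g (seq k)), ⟨Or.inr ⟨k, hik, hkj, rfl⟩, Sym2.mem_mk_left _ _⟩, ?_⟩
        rintro y ⟨hy, hvy⟩
        rcases hy with ⟨hyM, hyA⟩ | ⟨l, hil, hlj, rfl⟩
        · exact absurd ((hMeq _ y hyM hvy) ▸ hUinA k hik hkj) hyA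
        · rcases Sym2.mem_iff.mp hvy with h | h
          · rw [hinj k l hkj hlj h]
          · exact absurd h (hUW k l)
      · by_cases hvW : ∃ k, i ≤ k ∧ k < j ∧ v = g (seq k)
        · obtain ⟨k, hik, hkj, rfl⟩ := hvW
          refine ⟨s(seq k, g (seq k)), ⟨Or.inr ⟨k, hik, hkj, rfl⟩, Sym2.mem_mk_right _ _⟩, ?_⟩
          rintro y ⟨hy, hvy⟩
          rcases hy with ⟨hyM, hyA⟩ | ⟨l, hil, hlj, rfl⟩
          · exact absurd ((hMeq _ y hyM hvy) ▸ ⟨k, hik, hkj, rfl⟩) hyA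
          · rcases Sym2.mem_iff.mp hvy with h | h
            · exact absurd h.symm (hUW l k)
            · rw [hginj k l hik hkj hil hlj h]
        · have hnotA : s(v, f v) ∉ A := by
            rintro ⟨l, hil, hlj, he⟩
            rcases Sym2.eq_iff.mp he with ⟨h, _⟩ | ⟨h, _⟩
            · exact hvW ⟨l, hil, hlj, h⟩
            · rw [hfg] at h
              rcases Nat.lt_or_ge (l + 1) j with hl1 | hl1
              · exact hvU ⟨l + 1, by omega, hl1, h⟩
              · have : l + 1 = j := by omega
                exact hvU ⟨i, le_refl i, hij, by rw [h, this, ← hije]⟩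
          refine ⟨s(v, f v), ⟨Or.inl ⟨hfM v, hnotA⟩, Sym2.mem_mk_left _ _⟩, ?_⟩
          rintro y ⟨hy, hvy⟩
          rcases hy with ⟨hyM, _⟩ | ⟨l, hil, hlj, rfl⟩
          · exact hMeq v y hyM hvy
          · rcases Sym2.mem_iff.mp hvy with h | h
            · exact absurd ⟨l, hil, hlj, h⟩ hvU
            · exact absurd ⟨l, hil, hlj, h⟩ hvW
  have hMM : M' = M := huniqM M' hPM'
  have hBelem : s(seq i, g (seq i)) ∈ M' := Or.inr ⟨i, le_refl i, hij, rfl⟩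
  rw [hMM] at hBelem
  have := hMeq (seq i) _ hBelem (Sym2.mem_mk_left _ _)
  exact hgne i (Sym2.congr_right.mp this)

/-- A bipartite graph with a unique perfect matching has a vertex
of degree 1 in each color class. -/
theorem statement1 (G : SimpleGraph V) [Nonempty V] [DecidableRel G.Adj]
    (C : V → Bool) (hC : ∀ u v, G.Adj u v → C u ≠ C v)
    (M : Set (Sym2 V)) (hM : IsUniquePM G M) :
    (∃ u, C u = true ∧ G.degree u = 1) ∧ (∃ u, C u = false ∧ G.degree u = 1) := by
  obtain ⟨v0⟩ := ‹Nonempty V›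
  obtain ⟨e, ⟨heM, hve⟩, -⟩ := hM.1.2 v0
  have hadj : G.Adj v0 (Sym2.Mem.other hve) := by
    have h1 : s(v0, Sym2.Mem.other hve) = e := Sym2.other_spec hve
    have h2 := hM.1.1 heM
    rw [← h1] at h2
    exact G.mem_edgeSet.mp h2
  have hne := hC _ _ hadj
  have hC' : ∀ u v, G.Adj u v → (!C u) ≠ (!C v) := by
    intro u v h hh
    exact hC u v h (by simpa using hh)
  have htrue : ∃ t, C t = true := by
    cases h : C v0 with
    | true => exact ⟨v0, h⟩
    | false =>
      refine ⟨Sym2.Mem.other hve, ?_⟩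
      rw [h] at hne
      exact (Bool.not_eq_false _).mp (Ne.symm hne)
  have hfalse : ∃ t, C t = false := by
    cases h : C v0 with
    | false => exact ⟨v0, h⟩
    | true =>
      refine ⟨Sym2.Mem.other hve, ?_⟩
      rw [h] at hne
      exact (Bool.not_eq_true _).mp (Ne.symm hne)
  obtain ⟨t, ht⟩ := htrue
  obtain ⟨s, hs⟩ := hfalse
  refine ⟨key G C hC M hM t ht, ?_⟩
  obtain ⟨u, hu1, hu2⟩ := key G (fun v => !C v) hC' M hM s (by simp [hs])
  exact ⟨u, by simpa using hu1, hu2⟩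
end

section
/- Let G be a graph with a perfect matching M and let e be an edge of G not in M. Then e is an anti-forcing edge of G (i.e., G − e has a unique perfect matching) if and only if every M-alternating cycle of G passes through e. -/
open scoped Classical

variable {V : Type*} [Fintype V] [DecidableEq V]

/-!
Both directions compare `M` with a second perfect matching through a symmetric difference.
If an `M`-alternating cycle `C` avoids `e`, then `M ∆ C` is a perfect matching of `G - e` other
than `M`. Conversely, if `M' ≠ M` are perfect matchings of `G - e`, the graph `M ∆ M'` has all
degrees `0` or `2` and alternates with respect to `M`, so it contains an `M`-alternating cycle,
which cannot pass through `e ∉ M ∪ M'`. Matchings are turned into graphs by `fromEdgeSet`, so that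
Mathlib's `IsCycles` and `IsAlternating` apply.
-/
open SimpleGraph
open scoped symmDiff

section

-- A fresh `V`, so that the `Fintype` and `DecidableEq` variables above stay out of these
-- lemmas.
variable {V : Type*} {G : SimpleGraph V} {M M' : Set (Sym2 V)}

theorem isPM_iff :
    IsPM G M ↔ M ⊆ G.edgeSet ∧ (⊤ : (fromEdgeSet M).Subgraph).IsPerfectMatching := by
  simp only [IsPM, Subgraph.isPerfectMatching_iff, Subgraph.top_adj, fromEdgeSet_adj]
  refine and_congr_right fun hMG => forall_congr' fun v => ?_
  have hne : ∀ {w}, s(v, w) ∈ M → v ≠ w := fun hw => G.ne_of_adj (hMG hw)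
  constructor
  · rintro ⟨f, ⟨hfM, hvf⟩, huniq⟩
    rw [← Sym2.other_spec hvf] at hfM huniq
    refine ⟨_, ⟨hfM, hne hfM⟩, fun w hw => ?_⟩
    exact Sym2.congr_right.mp (huniq _ ⟨hw.1, Sym2.mem_mk_left _ _⟩)
  · rintro ⟨w, ⟨hwM, -⟩, huniq⟩
    refine ⟨s(v, w), ⟨hwM, Sym2.mem_mk_left _ _⟩, fun f ⟨hfM, hvf⟩ => ?_⟩
    rw [← Sym2.other_spec hvf] at hfM ⊢
    rw [huniq _ ⟨hfM, hne hfM⟩]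

theorem IsPM.deleteEdges {s : Set (Sym2 V)} (hM : IsPM G M) (hMs : Disjoint M s) :
    IsPM (G.deleteEdges s) M :=
  ⟨by rw [edgeSet_deleteEdges]; exact Set.subset_sdiff.mpr ⟨hM.1, hMs⟩, hM.2⟩

theorem IsPM.of_deleteEdges {s : Set (Sym2 V)} (hM : IsPM (G.deleteEdges s) M) : IsPM G M :=
  ⟨hM.1.trans (edgeSet_mono (deleteEdges_le s)), hM.2⟩

theorem IsPM.edgeSet_fromEdgeSet (hM : IsPM G M) : (fromEdgeSet M).edgeSet = M := by
  rw [SimpleGraph.edgeSet_fromEdgeSet, sdiff_eq_left, Set.disjoint_right]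
  exact fun f hf hfM => G.not_isDiag_of_mem_edgeSet (hM.1 hfM) hf

theorem fromEdgeSet_symmDiff (s t : Set (Sym2 V)) :
    fromEdgeSet (s ∆ t) = fromEdgeSet s ∆ fromEdgeSet t := by
  simp only [symmDiff_def, Set.sup_eq_union, fromEdgeSet_union, fromEdgeSet_sdiff]

theorem IsPM.eq_of_mem (hM : IsPM G M) {v w w' : V} (hw : s(v, w) ∈ M) (hw' : s(v, w') ∈ M) :
    w = w' :=
  Sym2.congr_right.mp ((hM.2 v).unique ⟨hw, Sym2.mem_mk_left _ _⟩ ⟨hw', Sym2.mem_mk_left _ _⟩)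

theorem IsAltCycle.mapLe {G' : SimpleGraph V} (h : G ≤ G') {u : V} {c : G.Walk u u}
    (hc : IsAltCycle M c) : IsAltCycle M (c.mapLe h) := by
  obtain ⟨hcyc, heven, halt⟩ := hc
  refine ⟨(Walk.isCycle_mapLe h).mpr hcyc, by simpa using heven, ?_⟩
  simpa [Walk.edges_mapLe_eq_edges] using halt

theorem IsAltCycle.exists_mem_of_mem_support {u v : V} {c : G.Walk u u} (hc : IsAltCycle M c)
    (hv : v ∈ c.support) : ∃ x, s(v, x) ∈ M ∧ s(v, x) ∈ c.edges := by
  obtain ⟨hcyc, heven, halt⟩ := hc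
  have hn := hcyc.three_le_length
  simp only [List.get_eq_getElem, Walk.getElem_edges, Walk.length_edges] at heven halt
  have key : ∀ j k, j < c.length → k < c.length → (Even j ↔ ¬ Even k) →
      s(c.getVert j, c.getVert (j + 1)) ∈ M ∨ s(c.getVert k, c.getVert (k + 1)) ∈ M := by
    intro j k hj hk hjk
    rcases halt with h | h <;> simp only [h j hj, h k hk] <;> tauto
  have hedge : ∀ j, j < c.length → s(c.getVert j, c.getVert (j + 1)) ∈ c.edges := fun j hj =>
    (Walk.mk_mem_edges_iff_exists c).mpr ⟨j, hj, rfl⟩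
  obtain ⟨i, rfl, hi⟩ := Walk.mem_support_iff_exists_getVert.mp hv
  -- The two edges of `c` at `getVert i` have indices of opposite parity: `i - 1` and `i`, or,
  -- at the base point, `0` and `length - 1` (here `Even c.length` is used).
  by_cases hend : i = 0 ∨ i = c.length
  · have hu : c.getVert i = c.getVert 0 := by
      rcases hend with rfl | rfl <;> simp
    have hlast : c.getVert (c.length - 1 + 1) = c.getVert 0 := by
      rw [Nat.sub_add_cancel (by omega)]; simp
    have hpar : Even 0 ↔ ¬ Even (c.length - 1) := by
      rw [Nat.even_iff] at heven; simp only [Nat.even_iff, Nat.zero_mod, true_iff]; omega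
    rcases key 0 (c.length - 1) (by omega) (by omega) hpar with h | h
    · exact ⟨_, hu ▸ h, hu ▸ hedge 0 (by omega)⟩
    · rw [hlast, Sym2.eq_swap] at h
      refine ⟨_, hu ▸ h, hu ▸ ?_⟩
      rw [Sym2.eq_swap, ← hlast]; exact hedge _ (by omega)
  · have hi' : i - 1 + 1 = i := by omega
    rcases key i (i - 1) (by omega) (by omega)
      (by simp only [Nat.even_iff]; omega) with h | h
    · exact ⟨_, h, hedge i (by omega)⟩
    · rw [hi', Sym2.eq_swap] at h
      refine ⟨_, h, ?_⟩
      rw [Sym2.eq_swap, ← hi']; exact hedge _ (by omega)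

theorem IsAltCycle.isAlternating (hM : IsPM G M) {u : V} {c : G.Walk u u}
    (hc : IsAltCycle M c) :
    c.toSubgraph.spanningCoe.IsAlternating (fromEdgeSet M) := by
  intro v w w' hww' hvw hvw'
  rw [Subgraph.spanningCoe_adj] at hvw hvw'
  -- The `M`-edge at `v` lies on `c`, and `c` has only two edges at `v`.
  obtain ⟨x, hxM, hx⟩ := hc.exists_mem_of_mem_support (Walk.mem_support_of_adj_toSubgraph hvw)
  have hvx : c.toSubgraph.Adj v x := Walk.adj_toSubgraph_iff_mem_edges.mpr hx
  simp only [fromEdgeSet_adj, hvw.ne, hvw'.ne, ne_eq, not_false_eq_true, and_true]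
  constructor
  · exact fun hw hw' => hww' (hM.eq_of_mem hw hw')
  · intro hw'
    by_contra hw
    have hxw : w ≠ x := fun h => hw (h ▸ hxM)
    have := (hc.1.isCycles_spanningCoe_toSubgraph.existsUnique_ne_adj hvw).unique
      ⟨hww', hvw'⟩ ⟨hxw, hvx⟩
    exact hw' (this ▸ hxM)

theorem SimpleGraph.Walk.IsCycle.isAltCycle_of_isAlternating {H : SimpleGraph V} {u : V}
    {c : H.Walk u u} (hc : c.IsCycle) (halt : H.IsAlternating (fromEdgeSet M)) :
    IsAltCycle M c := by
  have hn := hc.three_le_length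
  set P : ℕ → Prop := fun i => s(c.getVert i, c.getVert (i + 1)) ∈ M with hP
  have hadjM : ∀ {a b}, H.Adj a b → (s(a, b) ∈ M ↔ (fromEdgeSet M).Adj a b) := fun h => by
    simp [h.ne]
  have step : ∀ i, i + 1 < c.length → (P i ↔ ¬ P (i + 1)) := by
    intro i hi
    have hne := hc.getVert_sub_one_ne_getVert_add_one (i := i + 1) (by omega)
    simp only [add_tsub_cancel_right] at hne
    have h1 := (c.adj_getVert_succ (i := i) (by omega)).symm
    have h2 := c.adj_getVert_succ (i := i + 1) hi
    simp only [hP, Sym2.eq_swap (a := c.getVert i), hadjM h1, hadjM h2]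
    exact halt hne h1 h2
  have wrap : P (c.length - 1) ↔ ¬ P 0 := by
    have h1 := (c.adj_penultimate hc.not_nil).symm
    have h2 := c.adj_snd hc.not_nil
    have hlast : c.getVert (c.length - 1 + 1) = u := by
      rw [Nat.sub_add_cancel (by omega), c.getVert_length]
    simp only [hP, hlast, Sym2.eq_swap (a := c.getVert (c.length - 1)), c.getVert_zero]
    rw [hadjM h1, hadjM h2]
    exact halt hc.snd_ne_penultimate.symm h1 h2
  have parity : ∀ i, i < c.length → (P i ↔ (Even i ↔ P 0)) := by
    intro i hi
    induction i with
    | zero => simp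
    | succ i ih =>
      have := step i hi
      rw [ih (by omega)] at this
      rw [Nat.even_add_one]
      tauto
  have heven : Even c.length := by
    by_contra hodd
    have := parity (c.length - 1) (by omega)
    have hodd' : Even (c.length - 1) := by
      rw [Nat.even_iff] at hodd ⊢; omega
    rw [wrap] at this
    tauto
  refine ⟨hc, by simpa using heven, ?_⟩
  simp only [List.get_eq_getElem, Walk.getElem_edges, Walk.length_edges]
  by_cases h0 : P 0
  · exact Or.inl fun i hi => by simpa [h0] using parity i hi
  · exact Or.inr fun i hi => by simpa [h0] using parity i hi

theorem IsPM.symmDiff_of_isAltCycle (hM : IsPM G M) {u : V} {c : G.Walk u u}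
    (hc : IsAltCycle M c) : IsPM G (M ∆ {f | f ∈ c.edges}) := by
  obtain ⟨hMG, hMpm⟩ := isPM_iff.mp hM
  have hc_graph : fromEdgeSet {f | f ∈ c.edges} = c.toSubgraph.spanningCoe := by
    ext a b
    simp only [fromEdgeSet_adj, Set.mem_ofPred_eq, Subgraph.spanningCoe_adj,
      Walk.adj_toSubgraph_iff_mem_edges, and_iff_left_iff_imp]
    exact fun h => G.ne_of_adj (c.edges_subset_edgeSet h)
  have hcG : {f | f ∈ c.edges} ⊆ G.edgeSet := fun _ hf => c.edges_subset_edgeSet hf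
  rw [isPM_iff, fromEdgeSet_symmDiff, hc_graph]
  exact ⟨Set.symmDiff_subset_union.trans (Set.union_subset hMG hcG),
    hMpm.symmDiff_of_isAlternating (hc.isAlternating hM) hc.1.isCycles_spanningCoe_toSubgraph⟩

theorem IsPM.exists_isAltCycle_of_ne [Finite V] (hM : IsPM G M) (hM' : IsPM G M')
    (hne : M ≠ M') :
    ∃ (u : V) (c : G.Walk u u), IsAltCycle M c ∧ ∀ f ∈ c.edges, f ∈ M ∆ M' := by
  obtain ⟨hMG, hMpm⟩ := isPM_iff.mp hM
  obtain ⟨hM'G, hM'pm⟩ := isPM_iff.mp hM'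
  set H := fromEdgeSet M ∆ fromEdgeSet M' with hH
  rw [← fromEdgeSet_symmDiff] at hH
  obtain ⟨a, b, hab⟩ : ∃ a b, H.Adj a b := by
    rw [← ne_bot_iff_exists_adj, Ne, symmDiff_eq_bot]
    intro h
    exact hne (by rw [← hM.edgeSet_fromEdgeSet, ← hM'.edgeSet_fromEdgeSet, h])
  obtain ⟨c, hc, -⟩ :=
    (hMpm.symmDiff_isCycles hM'pm).exists_cycle_toSubgraph_verts_eq_connectedComponentSupp
      (c := H.connectedComponentMk a) rfl ⟨b, hab⟩
  have hcH : ∀ f ∈ c.edges, f ∈ M ∆ M' := fun f hf => by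
    have := c.edges_subset_edgeSet hf
    rw [hH, SimpleGraph.edgeSet_fromEdgeSet] at this
    exact this.1
  have hHG : H ≤ G := by
    rw [hH, fromEdgeSet_le]
    exact fun f hf => Set.union_subset hMG hM'G (Set.symmDiff_subset_union hf.1)
  exact ⟨a, c.mapLe hHG, (hc.isAltCycle_of_isAlternating
    (hMpm.isAlternating_symmDiff_left hM'pm)).mapLe hHG, by rwa [Walk.edges_mapLe_eq_edges]⟩

end

theorem statement2_general (G : SimpleGraph V) (M : Set (Sym2 V)) (hM : IsPM G M)
    (e : Sym2 V) (heM : e ∉ M) :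
    (∃ N, IsUniquePM (G.deleteEdges {e}) N) ↔
      ∀ (v : V) (c : G.Walk v v), IsAltCycle M c → e ∈ c.edges := by
  have hMe : IsPM (G.deleteEdges {e}) M := hM.deleteEdges (Set.disjoint_singleton_right.mpr heM)
  constructor
  · rintro ⟨N, -, huniq⟩ v c hc
    by_contra hec
    have hC := hM.symmDiff_of_isAltCycle hc
    have hCe : IsPM (G.deleteEdges {e}) (M ∆ {f | f ∈ c.edges}) :=
      hC.deleteEdges (Set.disjoint_singleton_right.mpr (by simp [Set.mem_symmDiff, heM, hec]))
    have : M ∆ {f | f ∈ c.edges} = M := (huniq _ hCe).trans (huniq _ hMe).symm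
    rw [symmDiff_eq_left, Set.bot_eq_empty, Set.eq_empty_iff_forall_notMem] at this
    exact hc.1.not_nil (Walk.edges_eq_nil.mp (List.eq_nil_iff_forall_not_mem.mpr this))
  · intro hthrough
    refine ⟨M, hMe, fun M' hM' => ?_⟩
    by_contra hne
    obtain ⟨v, c, hc, hcM⟩ := hM.exists_isAltCycle_of_ne hM'.of_deleteEdges (Ne.symm hne)
    have heM' : e ∉ M' := fun h => (edgeSet_deleteEdges {e} ▸ hM'.1 h).2 rfl
    simpa [Set.mem_symmDiff, heM, heM'] using hcM e (hthrough v c hc)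

/-- An edge `e ∉ M` is an anti-forcing edge of `G` (i.e. `G - e`
has a unique perfect matching) iff every `M`-alternating cycle of `G` passes
through `e`. -/
theorem statement2 (G : SimpleGraph V) (M : Set (Sym2 V)) (hM : IsPM G M)
    (e : Sym2 V) (he : e ∈ G.edgeSet) (heM : e ∉ M) :
    (∃ N, IsUniquePM (G.deleteEdges {e}) N) ↔
      ∀ (v : V) (c : G.Walk v v), IsAltCycle M c → e ∈ c.edges :=
  statement2_general G M hM e heM
end

section
/- Let G be a graph with a perfect matching M, and let 𝒜 be a compatible M-alternating set of cycles of G. Then af(G, M) ≥ |𝒜|, i.e., the anti-forcing number of M is at least the cardinality of any compatible M-alternating set. -/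
open scoped Classical

variable {V : Type*} [Fintype V] [DecidableEq V]

/-! An anti-forcing set `S` of `M` meets every `M`-alternating cycle `C`: otherwise `C` lies in
`G - S`, and `M ∆ E(C)` is a second perfect matching of `G - S`. Picking an edge of `S` on each
cycle of a compatible set is injective, since two of the cycles share only edges of `M` while
`S` avoids `M`. -/

open scoped symmDiff

lemma List.alternating_rotate {α : Type*} {p : α → Prop} {l : List α} (hl : Even l.length)
    (h : (∀ i (hi : i < l.length), p l[i] ↔ Even i) ∨ (∀ i (hi : i < l.length), p l[i] ↔ ¬ Even i))
    (n : ℕ) :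
    (∀ i (hi : i < (l.rotate n).length), p (l.rotate n)[i] ↔ Even i) ∨
      (∀ i (hi : i < (l.rotate n).length), p (l.rotate n)[i] ↔ ¬ Even i) := by
  have hparity : ∀ i, Even ((i + n) % l.length) ↔ (Even i ↔ Even n) := fun i => by
    rw [hl.mod_even_iff, Nat.even_add]
  simp only [List.getElem_rotate, List.length_rotate]
  by_cases hn : Even n <;> rcases h with h | h
  · exact .inl fun i hi => by rw [h, hparity]; tauto
  · exact .inr fun i hi => by rw [h, hparity]; tauto
  · exact .inr fun i hi => by rw [h, hparity]; tauto
  · exact .inl fun i hi => by rw [h, hparity]; tauto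

namespace SimpleGraph.Walk

variable {V : Type*} {G : SimpleGraph V}

lemma IsCycle.start_mem_getElem_edges_iff {u : V} {c : G.Walk u u} (hc : c.IsCycle) {i : ℕ}
    (hi : i < c.edges.length) : u ∈ c.edges[i] ↔ i = 0 ∨ i = c.length - 1 := by
  rw [length_edges] at hi
  rw [getElem_edges, Sym2.mem_iff, eq_comm (a := u), hc.getVert_endpoint_iff hi.le,
    eq_comm (a := u), hc.getVert_endpoint_iff (by omega)]
  omega

lemma mem_support_of_mem_of_mem_edges {u v w : V} {p : G.Walk u v} {e : Sym2 V}
    (hwe : w ∈ e) (he : e ∈ p.edges) : w ∈ p.support := by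
  obtain ⟨x, rfl⟩ := Sym2.mem_iff_exists.1 hwe
  exact p.fst_mem_support_of_mem_edges he

end SimpleGraph.Walk

open SimpleGraph Walk

section

variable {V : Type*} {G : SimpleGraph V} {M : Set (Sym2 V)}

lemma IsAltCycle.rotate [DecidableEq V] {v u : V} {c : G.Walk v v}
    (hc : IsAltCycle M c) (hu : u ∈ c.support) : IsAltCycle M (c.rotate u hu) := by
  obtain ⟨hcyc, hev, halt⟩ := hc
  obtain ⟨n, hn⟩ := (c.rotate_edges u hu).symm
  simp only [List.get_eq_getElem] at halt
  refine ⟨hcyc.rotate hu, by rwa [← hn, List.length_rotate], ?_⟩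
  simp only [List.get_eq_getElem, ← hn]
  exact List.alternating_rotate hev halt n

lemma IsAltCycle.exists_edges_at_start {u : V} {c : G.Walk u u} (hc : IsAltCycle M c) :
    ∃ e₁ ∈ c.edges, ∃ e₂ ∈ c.edges, u ∈ e₁ ∧ u ∈ e₂ ∧ e₁ ∈ M ∧ e₂ ∉ M ∧
      ∀ e ∈ c.edges, u ∈ e → e = e₁ ∨ e = e₂ := by
  obtain ⟨hcyc, hev, halt⟩ := hc
  simp only [List.get_eq_getElem] at halt
  have hlen : c.edges.length = c.length := c.length_edges
  have h3 := hcyc.three_le_length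
  have hlast_odd : ¬ Even (c.length - 1) := by
    rw [hlen] at hev
    rw [Nat.even_sub (by omega)]
    simp [hev]
  have h0 : 0 < c.edges.length := by omega
  have hL : c.length - 1 < c.edges.length := by omega
  set first := c.edges[0]
  set last := c.edges[c.length - 1]
  have hfirst : u ∈ first := (hcyc.start_mem_getElem_edges_iff _).2 (.inl rfl)
  have hlast : u ∈ last := (hcyc.start_mem_getElem_edges_iff _).2 (.inr rfl)
  have honly : ∀ e ∈ c.edges, u ∈ e → e = first ∨ e = last := by
    intro e he hue
    obtain ⟨i, hi, rfl⟩ := List.getElem_of_mem he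
    rcases (hcyc.start_mem_getElem_edges_iff hi).1 hue with rfl | rfl
    exacts [.inl rfl, .inr rfl]
  rcases halt with h | h
  · exact ⟨first, List.getElem_mem _, last, List.getElem_mem _, hfirst, hlast,
      (h 0 h0).2 Even.zero, fun hm => hlast_odd ((h _ hL).1 hm), honly⟩
  · exact ⟨last, List.getElem_mem _, first, List.getElem_mem _, hlast, hfirst,
      (h _ hL).2 hlast_odd, fun hm => (h 0 h0).1 hm Even.zero,
      fun e he hue => (honly e he hue).symm⟩

lemma IsAltCycle.exists_edges_at [DecidableEq V] {v w : V} {c : G.Walk v v}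
    (hc : IsAltCycle M c) (hw : w ∈ c.support) :
    ∃ e₁ ∈ c.edges, ∃ e₂ ∈ c.edges, w ∈ e₁ ∧ w ∈ e₂ ∧ e₁ ∈ M ∧ e₂ ∉ M ∧
      ∀ e ∈ c.edges, w ∈ e → e = e₁ ∨ e = e₂ := by
  simpa only [(c.rotate_edges w hw).mem_iff] using (hc.rotate hw).exists_edges_at_start

lemma IsPM.symmDiff_edgeSet [DecidableEq V] {H : SimpleGraph V} {v : V} {c : G.Walk v v}
    (hM : IsPM H M) (hc : IsAltCycle M c) (hcH : c.edgeSet ⊆ H.edgeSet) :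
    IsPM H (M ∆ c.edgeSet) := by
  refine ⟨?_, fun w => ?_⟩
  · rintro e (⟨heM, -⟩ | ⟨hec, -⟩)
    exacts [hM.1 heM, hcH hec]
  by_cases hw : w ∈ c.support
  · obtain ⟨e₁, he₁, e₂, he₂, hwe₁, hwe₂, he₁M, he₂M, honly⟩ := hc.exists_edges_at hw
    refine ⟨e₂, ⟨.inr ⟨he₂, he₂M⟩, hwe₂⟩, ?_⟩
    rintro f ⟨⟨hfM, hfc⟩ | ⟨hfc, hfM⟩, hwf⟩
    · exact absurd ((hM.2 w).unique ⟨hfM, hwf⟩ ⟨he₁M, hwe₁⟩ ▸ he₁) hfc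
    · exact (honly f hfc hwf).resolve_left (by rintro rfl; exact hfM he₁M)
  · obtain ⟨f, ⟨hfM, hwf⟩, hf⟩ := hM.2 w
    have hoff : ∀ {e}, w ∈ e → e ∉ c.edgeSet := fun hwe hec =>
      hw (c.mem_support_of_mem_of_mem_edges hwe hec)
    refine ⟨f, ⟨.inl ⟨hfM, hoff hwf⟩, hwf⟩, ?_⟩
    rintro g ⟨⟨hgM, -⟩ | ⟨hgc, -⟩, hwg⟩
    exacts [hf g ⟨hgM, hwg⟩, absurd hgc (hoff hwg)]

lemma IsAntiForcingSet.exists_mem_edges [DecidableEq V] {S : Set (Sym2 V)}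
    (hS : IsAntiForcingSet G M S) {v : V} {c : G.Walk v v} (hc : IsAltCycle M c) :
    ∃ e ∈ c.edges, e ∈ S := by
  by_contra! hcS
  have hcH : c.edgeSet ⊆ (G.deleteEdges S).edgeSet := fun e he => by
    rw [edgeSet_deleteEdges]
    exact ⟨c.edges_subset_edgeSet he, hcS e he⟩
  have hempty := symmDiff_eq_left.1 (hS.2.2 _ (hS.2.1.symmDiff_edgeSet hc hcH))
  obtain ⟨e, he, -⟩ := hc.exists_edges_at_start
  exact (hempty ▸ he : e ∈ (⊥ : Set (Sym2 V)))

lemma IsPM.eq_of_subset {H : SimpleGraph V} {M' : Set (Sym2 V)} (hM : IsPM G M)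
    (hM' : IsPM H M') (hsub : M' ⊆ M) : M' = M := by
  refine hsub.antisymm fun e he => ?_
  obtain ⟨x, hx⟩ : ∃ x, x ∈ e := e.ind fun x _ => ⟨x, Sym2.mem_mk_left _ _⟩
  obtain ⟨f, ⟨hfM', hxf⟩, -⟩ := hM'.2 x
  exact (hM.2 x).unique ⟨hsub hfM', hxf⟩ ⟨he, hx⟩ ▸ hfM'

lemma IsPM.isAntiForcingSet_edgeSet_diff (hM : IsPM G M) :
    IsAntiForcingSet G M (G.edgeSet \ M) := by
  have hdel : (G.deleteEdges (G.edgeSet \ M)).edgeSet = M := by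
    rw [edgeSet_deleteEdges, Set.sdiff_sdiff_cancel_left hM.1]
  refine ⟨subset_rfl, ⟨hdel.symm.subset, hM.2⟩, fun M' hM' => hM.eq_of_subset hM' ?_⟩
  exact hdel ▸ hM'.1

end

theorem statement6_general (G : SimpleGraph V) (M : Set (Sym2 V)) (hM : IsPM G M)
    (n : ℕ) (v : Fin n → V) (c : ∀ i, G.Walk (v i) (v i))
    (halt : ∀ i, IsAltCycle M (c i))
    (hcompat : ∀ i j, i ≠ j → ∀ e, e ∈ (c i).edges → e ∈ (c j).edges → e ∈ M) :
    n ≤ af G M := by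
  refine le_csInf ⟨_, (G.edgeSet \ M).toFinite.toFinset, rfl,
    by simpa using hM.isAntiForcingSet_edgeSet_diff⟩ ?_
  rintro _ ⟨S, rfl, hS⟩
  choose e he heS using fun i => hS.exists_mem_edges (halt i)
  have he_inj : Set.InjOn e (Finset.univ : Finset (Fin n)) := fun i _ j _ hij => by
    by_contra hne
    exact (hS.1 (heS i)).2 (hcompat i j hne _ (he i) (hij ▸ he j))
  simpa using Finset.card_le_card_of_injOn e (fun i _ => heS i) he_inj

/-- If `𝒜` is a compatible `M`-alternating set of cycles (here an
injective family of `n` `M`-alternating cycles, any two of which meet only in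
edges of `M`), then `af(G, M) ≥ n = |𝒜|`. -/
theorem statement6 (G : SimpleGraph V) (M : Set (Sym2 V)) (hM : IsPM G M)
    (n : ℕ) (v : Fin n → V) (c : ∀ i, G.Walk (v i) (v i))
    (halt : ∀ i, IsAltCycle M (c i))
    (hinj : ∀ i j, i ≠ j → (c i).edges.toFinset ≠ (c j).edges.toFinset)
    (hcompat : ∀ i j, i ≠ j → ∀ e, e ∈ (c i).edges → e ∈ (c j).edges → e ∈ M) :
    n ≤ af G M :=
  statement6_general G M hM n v c halt hcompat
end

section
/- Let G be a bipartite graph with a perfect matching M whose normal components (elementary components of the subgraph formed by non-fixed edges) are G₁, …, G_k. Then af(G, M) = Σᵢ af(Gᵢ, Mᵢ), where Mᵢ is the restriction of M to Gᵢ. -/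
/-!
An edge outside `M` lying in some perfect matching is non-fixed, and the `M`-edge at a vertex
carrying a non-fixed edge is itself non-fixed. So every perfect matching of `G` restricts to a
perfect matching of each normal component `Gᵢ` and differs from `M` only inside the components;
hence the union of anti-forcing sets of the `(Gᵢ, Mᵢ)` is anti-forcing for `(G, M)`. Conversely,
an anti-forcing set `S` of `(G, M)` cut down to `Gᵢ` is anti-forcing for `(Gᵢ, Mᵢ)`: a competing
perfect matching of `Gᵢ - Sᵢ`, completed by `M` outside `Gᵢ`, would be a perfect matching of
`G - S` other than `M`. The components have disjoint edge sets, which gives both inequalities.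
-/

open scoped Classical

variable {V : Type*} [Fintype V] [DecidableEq V]

/-- The subgraph of `G` formed by the non-fixed edges: edges of `G` lying in
some but not all perfect matchings of `G`. Its connected components are the
normal (elementary) components of `G`. -/
def nonFixed (G : SimpleGraph V) : SimpleGraph V :=
  SimpleGraph.fromEdgeSet
    {e | e ∈ G.edgeSet ∧ (∃ M, IsPM G M ∧ e ∈ M) ∧ (∃ M, IsPM G M ∧ e ∉ M)}

noncomputable instance (H : SimpleGraph V) : Fintype H.ConnectedComponent :=
  Fintype.ofSurjective H.connectedComponentMk (fun K => K.exists_rep)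

/-- The restriction of an edge set `M` on `V` to the subtype `s`. -/
def restrictEdges (s : Set V) (M : Set (Sym2 V)) : Set (Sym2 s) :=
  {e | Sym2.map (Subtype.val) e ∈ M}

section

variable {W : Type*} {G H : SimpleGraph W} {M N P S : Set (Sym2 W)}

lemma IsPM.eq_of_mem_s8 (hM : IsPM G M) {e f : Sym2 W} {v : W} (he : e ∈ M) (hf : f ∈ M)
    (hve : v ∈ e) (hvf : v ∈ f) : e = f :=
  (hM.2 v).unique ⟨he, hve⟩ ⟨hf, hvf⟩

lemma IsPM.eq_of_subset_s8 (hM : IsPM G M) (hN : IsPM H N) (hNM : N ⊆ M) : N = M := by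
  refine hNM.antisymm fun e he => ?_
  induction e using Sym2.ind with
  | _ a b =>
    obtain ⟨f, ⟨hf, haf⟩, -⟩ := hN.2 a
    rwa [← hM.eq_of_mem_s8 (hNM hf) he haf (Sym2.mem_mk_left a b)]

lemma isPM_deleteEdges_iff : IsPM (G.deleteEdges S) M ↔ IsPM G M ∧ Disjoint M S := by
  simp only [IsPM, SimpleGraph.edgeSet_deleteEdges, Set.subset_sdiff]
  tauto

lemma IsAntiForcingSet.isPM (hS : IsAntiForcingSet G M S) : IsPM G M :=
  (isPM_deleteEdges_iff.1 hS.2.1).1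

lemma isAntiForcingSet_of_forall (hM : IsPM G M) (hS : S ⊆ G.edgeSet \ M)
    (h : ∀ N, IsPM G N → Disjoint N S → N ⊆ M) : IsAntiForcingSet G M S := by
  refine ⟨hS, isPM_deleteEdges_iff.2 ⟨hM, (Set.subset_sdiff.1 hS).2.symm⟩, fun N hN => ?_⟩
  obtain ⟨hN, hNS⟩ := isPM_deleteEdges_iff.1 hN
  exact hM.eq_of_subset_s8 hN (h N hN hNS)

lemma exists_finset_isAntiForcingSet [Finite W] (hM : IsPM G M) :
    ∃ S : Finset (Sym2 W), IsAntiForcingSet G M ↑S := by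
  refine ⟨(Set.toFinite (G.edgeSet \ M)).toFinset, ?_⟩
  rw [Set.Finite.coe_toFinset]
  refine isAntiForcingSet_of_forall hM subset_rfl fun N hN hNS e he => ?_
  by_contra heM
  exact Set.disjoint_left.1 hNS he ⟨hN.1 he, heM⟩

-- This is the case of the isolated vertices of `nonFixed G`: `af` is then `sInf ∅ = 0`.
lemma af_eq_zero_of_not_isPM (hM : ¬ IsPM G M) : af G M = 0 := by
  refine Nat.sInf_eq_zero.2 (.inr (Set.eq_empty_of_forall_notMem ?_))
  rintro _ ⟨_, _, hS⟩
  exact hM hS.isPM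

lemma af_le_card {S : Finset (Sym2 W)} (hS : IsPM G M → IsAntiForcingSet G M ↑S) :
    af G M ≤ S.card := by
  by_cases hM : IsPM G M
  · exact Nat.sInf_le ⟨S, rfl, hS hM⟩
  · simp [af_eq_zero_of_not_isPM hM]

lemma exists_finset_card_eq_af [Finite W] (G : SimpleGraph W) (M : Set (Sym2 W)) :
    ∃ S : Finset (Sym2 W), S.card = af G M ∧ (IsPM G M → IsAntiForcingSet G M ↑S) ∧
      (¬ IsPM G M → S = ∅) := by
  by_cases hM : IsPM G M
  · obtain ⟨S, hS⟩ := exists_finset_isAntiForcingSet hM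
    obtain ⟨T, hT, hTaf⟩ := Nat.sInf_mem
      (s := {n | ∃ S : Finset (Sym2 W), S.card = n ∧ IsAntiForcingSet G M ↑S}) ⟨_, S, rfl, hS⟩
    exact ⟨T, hT, fun _ => hTaf, fun h => absurd hM h⟩
  · exact ⟨∅, (af_eq_zero_of_not_isPM hM).symm, fun h => absurd h hM, fun _ => rfl⟩

lemma mem_edgeSet_induce_iff {s : Set W} {f : Sym2 s} :
    f ∈ (H.induce s).edgeSet ↔ Sym2.map Subtype.val f ∈ H.edgeSet := by
  induction f using Sym2.ind with
  | _ a b => simp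

lemma mem_restrictEdges_iff {s : Set W} {f : Sym2 s} :
    f ∈ restrictEdges s M ↔ Sym2.map Subtype.val f ∈ M := by
  rfl

lemma isPM_induce_restrictEdges {s : Set W} (hP : IsPM G P)
    (h : ∀ v ∈ s, ∀ w, s(v, w) ∈ P → H.Adj v w ∧ w ∈ s) :
    IsPM (H.induce s) (restrictEdges s P) := by
  refine ⟨fun f hf => ?_, fun v => ?_⟩
  · induction f using Sym2.ind with
    | _ a b => exact (h a a.2 b (mem_restrictEdges_iff.1 hf)).1
  · obtain ⟨e, ⟨he, hve⟩, -⟩ := hP.2 v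
    obtain ⟨w, rfl⟩ := Sym2.mem_iff_exists.1 hve
    have hw := (h v v.2 w he).2
    refine ⟨s(v, ⟨w, hw⟩), ⟨mem_restrictEdges_iff.2 he, Sym2.mem_mk_left _ _⟩,
      fun f ⟨hf, hvf⟩ => Sym2.map.injective Subtype.val_injective ?_⟩
    exact hP.eq_of_mem_s8 (mem_restrictEdges_iff.1 hf) he (Sym2.mem_map.2 ⟨v, hvf, rfl⟩)
      (Sym2.mem_mk_left _ _)

lemma IsPM.splice {s : Set W} {N : Set (Sym2 s)} (hM : IsPM G M) (hHG : H ≤ G)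
    (hMs : IsPM (H.induce s) (restrictEdges s M)) (hN : IsPM (H.induce s) N) :
    IsPM G ({e ∈ M | ∀ x ∈ e, x ∉ s} ∪ Sym2.map Subtype.val '' N) := by
  refine ⟨?_, fun x => ?_⟩
  · rintro _ (⟨he, -⟩ | ⟨f, hf, rfl⟩)
    · exact hM.1 he
    · exact SimpleGraph.edgeSet_mono hHG (mem_edgeSet_induce_iff.1 (hN.1 hf))
  by_cases hx : x ∈ s
  · obtain ⟨f, ⟨hf, hxf⟩, hfu⟩ := hN.2 ⟨x, hx⟩
    refine ⟨Sym2.map Subtype.val f, ⟨.inr ⟨f, hf, rfl⟩, Sym2.mem_map.2 ⟨_, hxf, rfl⟩⟩, ?_⟩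
    rintro _ ⟨⟨-, hout⟩ | ⟨f', hf', rfl⟩, hxe⟩
    · exact absurd hx (hout x hxe)
    · obtain ⟨a, ha, rfl⟩ := Sym2.mem_map.1 hxe
      rw [hfu f' ⟨hf', ha⟩]
  · obtain ⟨e, ⟨he, hxe⟩, heu⟩ := hM.2 x
    -- the `M`-edge at a vertex of `s` stays inside `s`, so the one at `x` avoids `s`
    have hout : ∀ y ∈ e, y ∉ s := by
      intro y hye hy
      obtain ⟨f, ⟨hf, hyf⟩, -⟩ := hMs.2 ⟨y, hy⟩
      have hfe := hM.eq_of_mem_s8 hf he (Sym2.mem_map.2 ⟨_, hyf, rfl⟩) hye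
      obtain ⟨a, -, rfl⟩ := Sym2.mem_map.1 (hfe ▸ hxe)
      exact hx a.2
    refine ⟨e, ⟨.inl ⟨he, hout⟩, hxe⟩, ?_⟩
    rintro _ ⟨⟨he', -⟩ | ⟨f, -, rfl⟩, hxe'⟩
    · exact heu _ ⟨he', hxe'⟩
    · obtain ⟨a, -, rfl⟩ := Sym2.mem_map.1 hxe'
      exact absurd a.2 hx

lemma IsAntiForcingSet.restrict {s : Set W} (hS : IsAntiForcingSet G M S) (hHG : H ≤ G)
    (hMs : IsPM (H.induce s) (restrictEdges s M)) :
    IsAntiForcingSet (H.induce s) (restrictEdges s M)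
      (restrictEdges s S ∩ (H.induce s).edgeSet) := by
  have hSM : Disjoint S M := (Set.subset_sdiff.1 hS.1).2
  refine isAntiForcingSet_of_forall hMs
    (fun f hf => ⟨hf.2, Set.disjoint_left.1 hSM hf.1⟩) fun Ns hNs hNsS f hf => ?_
  have hsplice := hS.isPM.splice hHG hMs hNs
  have hspliceS : Disjoint ({e ∈ M | ∀ x ∈ e, x ∉ s} ∪ Sym2.map Subtype.val '' Ns) S := by
    refine Set.disjoint_union_left.2 ⟨hSM.symm.mono_left fun e he => he.1, Set.disjoint_left.2 ?_⟩
    rintro _ ⟨f, hf, rfl⟩ hfS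
    exact Set.disjoint_left.1 hNsS hf ⟨hfS, hNs.1 hf⟩
  have hspliceM := hS.2.2 _ (isPM_deleteEdges_iff.2 ⟨hsplice, hspliceS⟩)
  exact mem_restrictEdges_iff.2 (hspliceM ▸ .inr ⟨f, hf, rfl⟩)

lemma mem_edgeSet_nonFixed {e : Sym2 W} : e ∈ (nonFixed G).edgeSet ↔
    e ∈ G.edgeSet ∧ (∃ N, IsPM G N ∧ e ∈ N) ∧ ∃ N, IsPM G N ∧ e ∉ N := by
  rw [nonFixed, SimpleGraph.edgeSet_fromEdgeSet]
  exact ⟨fun h => h.1, fun h => ⟨h, G.not_isDiag_of_mem_edgeSet h.1⟩⟩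

lemma nonFixed_le (G : SimpleGraph W) : nonFixed G ≤ G := fun v w h =>
  (mem_edgeSet_nonFixed (e := s(v, w)).1 h).1

-- A perfect matching `N` through `s(v, u)` misses `s(v, w)` unless `w = u`.
lemma IsPM.nonFixed_adj {v u w : W} (hP : IsPM G P) (hvu : (nonFixed G).Adj v u)
    (hvw : s(v, w) ∈ P) : (nonFixed G).Adj v w := by
  obtain ⟨-, ⟨N, hN, hvuN⟩, ⟨N', hN', hvuN'⟩⟩ := mem_edgeSet_nonFixed (e := s(v, u)).1 hvu
  refine mem_edgeSet_nonFixed.2 ⟨hP.1 hvw, ⟨P, hP, hvw⟩, ?_⟩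
  by_cases hwu : w = u
  · exact ⟨N', hN', hwu ▸ hvuN'⟩
  · refine ⟨N, hN, fun hvwN => hwu ?_⟩
    exact Sym2.congr_right.1 (hN.eq_of_mem_s8 hvwN hvuN (Sym2.mem_mk_left _ _) (Sym2.mem_mk_left _ _))

lemma SimpleGraph.ConnectedComponent.exists_adj_of_mem_supp {K : H.ConnectedComponent}
    {u w v : W} (hu : u ∈ K.supp) (huw : H.Adj u w) (hv : v ∈ K.supp) : ∃ x, H.Adj v x := by
  rw [SimpleGraph.ConnectedComponent.mem_supp_iff] at hu hv
  obtain ⟨p⟩ := SimpleGraph.ConnectedComponent.exact (hv.trans hu.symm)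
  cases p with
  | nil => exact ⟨w, huw⟩
  | cons h _ => exact ⟨_, h⟩

lemma IsPM.isPM_induce_supp_nonFixed {K : (nonFixed G).ConnectedComponent} {u w : W}
    (hP : IsPM G P) (hu : u ∈ K.supp) (huw : (nonFixed G).Adj u w) :
    IsPM ((nonFixed G).induce K.supp) (restrictEdges K.supp P) := by
  refine isPM_induce_restrictEdges hP fun v hv x hvx => ?_
  obtain ⟨y, hvy⟩ := K.exists_adj_of_mem_supp hu huw hv
  have hadj := hP.nonFixed_adj hvy hvx
  exact ⟨hadj, K.mem_supp_of_adj_mem_supp hv hadj⟩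

lemma isAntiForcingSet_iUnion_nonFixed (hM : IsPM G M)
    (T : ∀ K : (nonFixed G).ConnectedComponent, Set (Sym2 K.supp))
    (hT : ∀ K, IsPM ((nonFixed G).induce K.supp) (restrictEdges K.supp M) →
      IsAntiForcingSet ((nonFixed G).induce K.supp) (restrictEdges K.supp M) (T K))
    (hT₀ : ∀ K, ¬ IsPM ((nonFixed G).induce K.supp) (restrictEdges K.supp M) → T K = ∅) :
    IsAntiForcingSet G M (⋃ K, Sym2.map Subtype.val '' T K) := by
  refine isAntiForcingSet_of_forall hM ?_ fun N hN hNT e he => ?_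
  · rintro _ ⟨_, ⟨K, rfl⟩, f, hf, rfl⟩
    by_cases hMK : IsPM ((nonFixed G).induce K.supp) (restrictEdges K.supp M)
    · obtain ⟨hfK, hfM⟩ := (hT K hMK).1 hf
      exact ⟨SimpleGraph.edgeSet_mono (nonFixed_le G) (mem_edgeSet_induce_iff.1 hfK), hfM⟩
    · simp [hT₀ K hMK] at hf
  induction e using Sym2.ind with
  | _ v w =>
    by_contra hvwM
    have hvw : (nonFixed G).Adj v w :=
      mem_edgeSet_nonFixed.2 ⟨hN.1 he, ⟨N, hN, he⟩, ⟨M, hM, hvwM⟩⟩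
    set K := (nonFixed G).connectedComponentMk v
    have hv : v ∈ K.supp := rfl
    have hw : w ∈ K.supp := K.mem_supp_of_adj_mem_supp hv hvw
    have hNK :
        IsPM (((nonFixed G).induce K.supp).deleteEdges (T K)) (restrictEdges K.supp N) := by
      refine isPM_deleteEdges_iff.2 ⟨hN.isPM_induce_supp_nonFixed hv hvw, Set.disjoint_left.2 ?_⟩
      intro f hfN hfT
      exact Set.disjoint_left.1 hNT hfN (Set.mem_iUnion.2 ⟨K, f, hfT, rfl⟩)
    have hNKM := (hT K (hM.isPM_induce_supp_nonFixed hv hvw)).2.2 _ hNK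
    have hvwK : s((⟨v, hv⟩ : K.supp), ⟨w, hw⟩) ∈ restrictEdges K.supp N := he
    have hvwMK : s((⟨v, hv⟩ : K.supp), ⟨w, hw⟩) ∈ restrictEdges K.supp M := hNKM ▸ hvwK
    exact hvwM hvwMK

lemma injective_sigma_map_val {ι : Type*} {s : ι → Set W}
    (hs : Pairwise fun i j => Disjoint (s i) (s j)) :
    Function.Injective fun p : Σ i, Sym2 (s i) => Sym2.map Subtype.val p.2 := by
  rintro ⟨i, f⟩ ⟨j, g⟩ (hfg : Sym2.map Subtype.val f = Sym2.map Subtype.val g)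
  have hg : (f.out.1 : W) ∈ Sym2.map Subtype.val g :=
    hfg ▸ Sym2.mem_map.2 ⟨_, f.out_fst_mem, rfl⟩
  obtain ⟨b, -, hb⟩ := Sym2.mem_map.1 hg
  obtain rfl : i = j := by
    by_contra hij
    exact Set.disjoint_left.1 (hs hij) f.out.1.2 (hb ▸ b.2)
  simpa using Sym2.map.injective Subtype.val_injective hfg

def sigmaSym2Embedding (H : SimpleGraph W) :
    (Σ K : H.ConnectedComponent, Sym2 K.supp) ↪ Sym2 W :=
  ⟨_, injective_sigma_map_val H.pairwise_disjoint_supp_connectedComponent⟩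

variable [Fintype W]

lemma af_le_sum_af_nonFixed (hM : IsPM G M) :
    af G M ≤ ∑ K : (nonFixed G).ConnectedComponent,
      af ((nonFixed G).induce K.supp) (restrictEdges K.supp M) := by
  choose T hTcard hT hT₀ using fun K : (nonFixed G).ConnectedComponent =>
    exists_finset_card_eq_af ((nonFixed G).induce K.supp) (restrictEdges K.supp M)
  have hS := isAntiForcingSet_iUnion_nonFixed hM (fun K => ↑(T K)) hT
    fun K hK => by simp [hT₀ K hK]
  calc af G M ≤ ((Finset.univ.sigma T).map (sigmaSym2Embedding _)).card := by
        refine af_le_card fun _ => ?_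
        convert hS
        ext e
        simp [sigmaSym2Embedding]
    _ = _ := by simp [hTcard]

lemma sum_af_induce_le_af (hHG : H ≤ G) (hM : IsPM G M) :
    ∑ K : H.ConnectedComponent, af (H.induce K.supp) (restrictEdges K.supp M) ≤ af G M := by
  obtain ⟨S, hScard, hS, -⟩ := exists_finset_card_eq_af G M
  set R : ∀ K : H.ConnectedComponent, Finset (Sym2 K.supp) := fun K =>
    (Set.toFinite (restrictEdges K.supp ↑S ∩ (H.induce K.supp).edgeSet)).toFinset
  have hR : ∀ K, af (H.induce K.supp) (restrictEdges K.supp M) ≤ (R K).card := fun K =>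
    af_le_card fun hMK => by simpa [R] using (hS hM).restrict hHG hMK
  calc ∑ K, af (H.induce K.supp) (restrictEdges K.supp M)
      ≤ ∑ K, (R K).card := Finset.sum_le_sum fun K _ => hR K
    _ = ((Finset.univ.sigma R).map (sigmaSym2Embedding H)).card := by simp
    _ ≤ S.card := by
        refine Finset.card_le_card fun e he => ?_
        simp only [R, sigmaSym2Embedding, Finset.mem_map, Finset.mem_sigma, Finset.mem_univ,
          Set.Finite.mem_toFinset, true_and, Function.Embedding.coeFn_mk, Sigma.exists] at he
        obtain ⟨K, f, ⟨hfS, -⟩, rfl⟩ := he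
        exact hfS
    _ = af G M := hScard

end

theorem statement8_general (G : SimpleGraph V)
    (M : Set (Sym2 V)) (hM : IsPM G M) :
    af G M =
      ∑ K : (nonFixed G).ConnectedComponent,
        af (SimpleGraph.induce K.supp (nonFixed G)) (restrictEdges K.supp M) :=
  (af_le_sum_af_nonFixed hM).antisymm (sum_af_induce_le_af (nonFixed_le G) hM)

/-- For a bipartite graph `G` with perfect matching `M`,
`af(G, M)` equals the sum over the normal components `Gᵢ` (components of the
subgraph of non-fixed edges) of `af(Gᵢ, Mᵢ)`, where `Mᵢ` is the restriction of
`M` to `Gᵢ`. -/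
theorem statement8 (G : SimpleGraph V) (hbip : G.Colorable 2)
    (M : Set (Sym2 V)) (hM : IsPM G M) :
    af G M =
      ∑ K : (nonFixed G).ConnectedComponent,
        af (SimpleGraph.induce K.supp (nonFixed G)) (restrictEdges K.supp M) :=
  statement8_general G M hM
end

section
/- If a plane elementary bipartite graph G has an anti-forcing edge e = uv, then both endpoints u and v of e have degree 2 in G, and the two edges of M incident with u and v (where M is the unique perfect matching of G − e) are forcing edges of G. -/
open scoped Classical

variable {V : Type*} [Fintype V] [DecidableEq V]

/-- A combinatorial description of a plane embedding of a 2-connected graph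
`G`: a finite family of faces, each bounded by a cycle of `G`, such that every
edge of `G` lies on the boundaries of exactly two faces and Euler's formula
`|V| - |E| + |F| = 2` holds (the family includes the exterior face). -/
structure PlaneFaces (G : SimpleGraph V) where
  ι : Type
  instFin : Fintype ι
  basept : ι → V
  boundary : (f : ι) → G.Walk (basept f) (basept f)
  boundary_cycle : ∀ f, (boundary f).IsCycle
  edge_two_faces : ∀ e ∈ G.edgeSet, {f : ι | e ∈ (boundary f).edges}.ncard = 2
  euler : (Fintype.card V : ℤ) - G.edgeSet.ncard + @Fintype.card ι instFin = 2

/-- `G` is 2-connected: connected, and still connected after deleting any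
vertex. -/
def TwoConnected (G : SimpleGraph V) : Prop :=
  G.Connected ∧ ∀ v : V, (SimpleGraph.induce {u | u ≠ v} G).Connected

lemma pm_of_pm_del {G : SimpleGraph V} {S : Set (Sym2 V)} {M : Set (Sym2 V)}
    (h : IsPM (G.deleteEdges S) M) : IsPM G M := by
  refine ⟨fun e he => ?_, h.2⟩
  have := h.1 he
  rw [SimpleGraph.edgeSet_deleteEdges] at this
  exact this.1

lemma aux_force {G : SimpleGraph V} {u w : V} (_huw : G.Adj u w)
    {M : Set (Sym2 V)} (hM : IsUniquePM (G.deleteEdges {s(u, w)}) M)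
    {f : Sym2 V} (hf : f ∈ M) (huf : u ∈ f) :
    ∃! N, IsPM G N ∧ f ∈ N := by
  have hMG : IsPM G M := pm_of_pm_del hM.1
  have hfe : f ≠ s(u, w) := by
    have := hM.1.1 hf
    rw [SimpleGraph.edgeSet_deleteEdges] at this
    intro h
    exact this.2 (by simp [h])
  refine ⟨M, ⟨hMG, hf⟩, ?_⟩
  rintro N ⟨hN, hfN⟩
  by_cases he : s(u, w) ∈ N
  · obtain ⟨g, -, hg⟩ := hN.2 u
    have h1 := hg _ ⟨he, by simp⟩
    have h2 := hg _ ⟨hfN, huf⟩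
    exact absurd (h2.trans h1.symm) hfe
  · apply hM.2
    refine ⟨fun x hx => ?_, hN.2⟩
    rw [SimpleGraph.edgeSet_deleteEdges]
    refine ⟨hN.1 hx, fun hmem => ?_⟩
    rw [Set.mem_singleton_iff] at hmem
    subst hmem
    exact he hx

lemma aux_deg {G : SimpleGraph V} [DecidableRel G.Adj]
    (helem : ∀ e ∈ G.edgeSet, ∃ N, IsPM G N ∧ e ∈ N)
    {u w : V} (huw : G.Adj u w)
    {M : Set (Sym2 V)} (hM : IsUniquePM (G.deleteEdges {s(u, w)}) M) :
    G.degree u = 2 := by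
  obtain ⟨g, ⟨hgM, hug⟩, huniq⟩ := hM.1.2 u
  set mu := Sym2.Mem.other hug with hmu
  have hgspec : s(u, mu) = g := Sym2.other_spec hug
  have hgE : g ∈ G.edgeSet ∧ g ∉ ({s(u, w)} : Set (Sym2 V)) := by
    have := hM.1.1 hgM
    rwa [SimpleGraph.edgeSet_deleteEdges] at this
  have hmuw : mu ≠ w := by
    rintro rfl
    exact hgE.2 (by rw [← hgspec]; rfl)
  have hadj : ∀ x, G.Adj u x ↔ x = w ∨ x = mu := by
    intro x
    constructor
    · intro hx
      by_contra hcon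
      push_neg at hcon
      obtain ⟨hxw, hxmu⟩ := hcon
      have hfM : s(u, x) ∉ M := by
        intro hmem
        have h1 := huniq _ ⟨hmem, by simp⟩
        rw [← hgspec] at h1
        exact hxmu (Sym2.congr_right.mp h1)
      obtain ⟨N, hNpm, hfN⟩ := helem s(u, x) ((SimpleGraph.mem_edgeSet G).mpr hx)
      by_cases he : s(u, w) ∈ N
      · obtain ⟨g', -, hg'⟩ := hNpm.2 u
        have h1 := hg' _ ⟨he, by simp⟩
        have h2 := hg' _ ⟨hfN, by simp⟩
        exact hxw (Sym2.congr_right.mp (h2.trans h1.symm))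
      · have hNM : N = M := by
          apply hM.2
          refine ⟨fun y hy => ?_, hNpm.2⟩
          rw [SimpleGraph.edgeSet_deleteEdges]
          refine ⟨hNpm.1 hy, fun hmem => ?_⟩
          rw [Set.mem_singleton_iff] at hmem
          subst hmem
          exact he hy
        exact hfM (hNM ▸ hfN)
    · rintro (rfl | rfl)
      · exact huw
      · exact (SimpleGraph.mem_edgeSet G).mp (hgspec ▸ hgE.1)
  have hnb : G.neighborFinset u = {w, mu} := by
    ext x
    simp [SimpleGraph.mem_neighborFinset, hadj x]
  rw [← SimpleGraph.card_neighborFinset_eq_degree, hnb]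
  exact Finset.card_pair hmuw.symm

/-- If a plane elementary bipartite graph `G` has an anti-forcing
edge `e = uv` (so `G - e` has a unique perfect matching `M`), then `u` and `v`
have degree 2 in `G`, and each edge of `M` incident with `u` or `v` is a
forcing edge of `G` (it lies in exactly one perfect matching of `G`). -/
theorem statement13 (G : SimpleGraph V) [DecidableRel G.Adj] (P : PlaneFaces G)
    (h2 : TwoConnected G) (hbip : G.Colorable 2)
    (helem : ∀ e ∈ G.edgeSet, ∃ N, IsPM G N ∧ e ∈ N)
    (u w : V) (huw : G.Adj u w)
    (M : Set (Sym2 V)) (hM : IsUniquePM (G.deleteEdges {s(u, w)}) M) :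
    G.degree u = 2 ∧ G.degree w = 2 ∧
      ∀ f ∈ M, (u ∈ f ∨ w ∈ f) → ∃! N, IsPM G N ∧ f ∈ N := by
  have hM' : IsUniquePM (G.deleteEdges {s(w, u)}) M := by
    rwa [Sym2.eq_swap]
  refine ⟨aux_deg helem huw hM, aux_deg helem huw.symm hM', ?_⟩
  rintro f hf (huf | hwf)
  · exact aux_force huw hM hf huf
  · exact aux_force huw.symm hM' hf hwf
end

section
/- Every plane elementary bipartite graph that has an anti-forcing edge also has a forcing edge. -/
open scoped Classical

variable {V : Type*} [Fintype V] [DecidableEq V]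

/-- Every plane elementary bipartite graph with an anti-forcing
edge has a forcing edge (an edge lying in exactly one perfect matching). -/
theorem statement14 (G : SimpleGraph V) (P : PlaneFaces G)
    (h2 : TwoConnected G) (hbip : G.Colorable 2)
    (helem : ∀ e ∈ G.edgeSet, ∃ N, IsPM G N ∧ e ∈ N)
    (hanti : ∃ e ∈ G.edgeSet, ∃ N, IsUniquePM (G.deleteEdges {e}) N) :
    ∃ f ∈ G.edgeSet, ∃! N, IsPM G N ∧ f ∈ N := by
  obtain ⟨e, he, N, hNpm, hNuniq⟩ := hanti
  obtain ⟨hNsub, hNcov⟩ := hNpm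
  obtain ⟨a, ha⟩ : ∃ a, a ∈ e := ⟨e.out.1, Sym2.out_fst_mem e⟩
  obtain ⟨f, ⟨hfN, haf⟩, -⟩ := hNcov a
  have hfG : f ∈ G.edgeSet \ {e} := by
    have := hNsub hfN
    rwa [SimpleGraph.edgeSet_deleteEdges] at this
  have hfe : f ≠ e := hfG.2
  refine ⟨f, hfG.1, N, ⟨⟨fun x hx => ?_, hNcov⟩, hfN⟩, ?_⟩
  · exact ((SimpleGraph.edgeSet_deleteEdges {e} ▸ hNsub hx : x ∈ G.edgeSet \ {e})).1
  · rintro M ⟨⟨hMsub, hMcov⟩, hfM⟩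
    by_cases heM : e ∈ M
    · exact absurd ((hMcov a).unique ⟨hfM, haf⟩ ⟨heM, ha⟩) hfe
    · refine hNuniq M ⟨fun x hx => ?_, hMcov⟩
      rw [SimpleGraph.edgeSet_deleteEdges]
      exact ⟨hMsub hx, fun h => heM (Set.mem_singleton_iff.mp h ▸ hx)⟩
end
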